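/- Let A and B be abelian categories, F : A ⥤ B an exact and faithful functor, X an object of A, and v : V ⟶ X and w : W ⟶ X monomorphisms in A. If F.map v factors through F.map w in B (there exists h : F.obj V ⟶ F.obj W with F.map v = h ≫ F.map w), then v factors through w in A (there exists k : V ⟶ W with v = k ≫ w). In particular, exact faithful functors between abelian categories reflect the inclusion order on subobjects of each object. -/
import Mathlib

open CategoryTheory Limits

/-- Exact faithful functors between abelian categories reflect the inclusion order
on subobjects: if `F.map v` factors through `F.map w`, then `v` factors through
`w`. -/
theorem stmt_10 {A B : Type*} [Category A] [Category B] [Abelian A] [Abelian B]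
    (F : A ⥤ B) [PreservesFiniteLimits F] [PreservesFiniteColimits F] [F.Faithful]
    {X V W : A} (v : V ⟶ X) (w : W ⟶ X) [Mono v] [Mono w]
    (h : ∃ h' : F.obj V ⟶ F.obj W, F.map v = h' ≫ F.map w) :
    ∃ k : V ⟶ W, v = k ≫ w := by
  obtain ⟨h', hh⟩ := h
  have hz : v ≫ cokernel.π w = 0 := by
    apply F.map_injective
    rw [F.map_comp, F.map_zero, hh, Category.assoc, ← F.map_comp,
      cokernel.condition, F.map_zero, comp_zero]
  exact ⟨Abelian.monoLift w v hz, (Abelian.monoLift_comp w v hz).symm⟩
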